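/- arXiv:2305.06836 — 3 statements merged into one kernel-verified Lean document; each statement's English description precedes it below -/
import Mathlib

section
/- Let (M, J) be a complex manifold of arbitrary dimension with a locally conformally Kähler Hermitian form ω (i.e., locally ω = e^u ω₀ with ω₀ Kähler). Then the torsion bivector field σ_ω vanishes identically. -/
/-!
STATEMENT 7: If a Hermitian form `ω` on a complex manifold is locally
conformally Kähler (locally `ω = e^u ω₀` with `ω₀` Kähler), then the torsion
bivector field `σ_ω` vanishes identically.  Stated in local holomorphic
coordinates (on charts `U ⊆ ℂⁿ`), where
`(σ_ω)_{p̄ q̄} = g^{s k̄} ∂_s ( g^{m p̄} g^{l q̄} (i∂ω)_{m l k̄} )` with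
`(i∂ω)_{m l k̄} = −T_{m l k̄}` and `T_{m l k̄} = ∂_m g_{l k̄} − ∂_l g_{m k̄}`.
The Kähler condition on `ω₀` is the symmetry `∂_m (g₀)_{l k̄} = ∂_l (g₀)_{m k̄}`.
-/

open Complex

/-- Wirtinger derivative `∂/∂z_a` of `f : ℂⁿ → ℂ`. -/
noncomputable def pd {n : ℕ} (a : Fin n) (f : (Fin n → ℂ) → ℂ) (z : Fin n → ℂ) : ℂ :=
  (1 / 2) * (fderiv ℝ f z (Pi.single a 1) - Complex.I * fderiv ℝ f z (Pi.single a Complex.I))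

/-- The torsion components `T_{jk l̄} = ∂_j g_{k l̄} − ∂_k g_{j l̄}` of a Hermitian
metric `g` (here `g z j k` stands for `g_{j k̄}(z)`). -/
noncomputable def Tc {n : ℕ} (g : (Fin n → ℂ) → Fin n → Fin n → ℂ)
    (j k l : Fin n) : (Fin n → ℂ) → ℂ := fun z =>
  pd j (fun w => g w k l) z - pd k (fun w => g w j l) z

/-- Chern Christoffel symbols `Γ^s_{ij} = g^{s l̄} ∂_i g_{j l̄}`
(`Ginv z s l` stands for `g^{s l̄}(z)`). -/
noncomputable def Gam {n : ℕ} (g Ginv : (Fin n → ℂ) → Fin n → Fin n → ℂ)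
    (s i j : Fin n) : (Fin n → ℂ) → ℂ := fun z =>
  ∑ l, Ginv z s l * pd i (fun w => g w j l) z

/-- Chern covariant derivative `∇^C_s T_{j k l̄}` (the antiholomorphic
Christoffel symbols `Γ^{s̄}_{k l̄}` of the Chern connection vanish). -/
noncomputable def covT {n : ℕ} (g Ginv : (Fin n → ℂ) → Fin n → Fin n → ℂ)
    (s j k l : Fin n) : (Fin n → ℂ) → ℂ := fun z =>
  pd s (Tc g j k l) z
    - ∑ a, (Tc g a k l z * Gam g Ginv a s j z + Tc g j a l z * Gam g Ginv a s k z)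

/-- The torsion bivector field in local holomorphic coordinates:
`(σ_ω)_{p̄ q̄} = g^{s k̄} ∂_s ( g^{m p̄} g^{l q̄} (i∂ω)_{m l k̄} )`. -/
noncomputable def sigmaLoc {n : ℕ} (g Ginv : (Fin n → ℂ) → Fin n → Fin n → ℂ)
    (p q : Fin n) : (Fin n → ℂ) → ℂ := fun z =>
  ∑ s, ∑ k, Ginv z s k *
    pd s (fun w => ∑ m, ∑ l, Ginv w m p * Ginv w l q * (-(Tc g m l k w))) z

lemma pd_congr {n : ℕ} {a : Fin n} {f h : (Fin n → ℂ) → ℂ} {z : Fin n → ℂ}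
    (hfh : f =ᶠ[nhds z] h) : pd a f z = pd a h z := by
  unfold pd; rw [hfh.fderiv_eq]

lemma pd_sum {n : ℕ} {a : Fin n} {ι : Type*} {s : Finset ι} {F : ι → (Fin n → ℂ) → ℂ}
    {z : Fin n → ℂ} (h : ∀ i ∈ s, DifferentiableAt ℝ (F i) z) :
    pd a (fun w => ∑ i ∈ s, F i w) z = ∑ i ∈ s, pd a (F i) z := by
  unfold pd
  rw [fderiv_fun_sum h]
  simp only [ContinuousLinearMap.sum_apply, Finset.mul_sum, Finset.sum_sub_distrib, mul_sub]

lemma pd_mul {n : ℕ} {a : Fin n} {f h : (Fin n → ℂ) → ℂ} {z : Fin n → ℂ}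
    (hf : DifferentiableAt ℝ f z) (hh : DifferentiableAt ℝ h z) :
    pd a (fun w => f w * h w) z = pd a f z * h z + f z * pd a h z := by
  unfold pd
  rw [fderiv_fun_mul hf hh]
  simp [ContinuousLinearMap.smul_apply, smul_eq_mul]
  ring

lemma pd_sub {n : ℕ} {a : Fin n} {f h : (Fin n → ℂ) → ℂ} {z : Fin n → ℂ}
    (hf : DifferentiableAt ℝ f z) (hh : DifferentiableAt ℝ h z) :
    pd a (fun w => f w - h w) z = pd a f z - pd a h z := by
  unfold pd
  rw [fderiv_fun_sub hf hh]
  simp; ring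

lemma pd_contDiffOn {n : ℕ} {a : Fin n} {f : (Fin n → ℂ) → ℂ} {s : Set (Fin n → ℂ)}
    (hs : IsOpen s) (hf : ContDiffOn ℝ (⊤ : ℕ∞) f s) : ContDiffOn ℝ (⊤ : ℕ∞) (pd a f) s := by
  have hd : ContDiffOn ℝ (⊤ : ℕ∞) (fderiv ℝ f) s := hf.fderiv_of_isOpen hs (by simp)
  unfold pd
  have h1 : ContDiffOn ℝ (⊤ : ℕ∞) (fun z => fderiv ℝ f z (Pi.single a 1)) s :=
    hd.clm_apply contDiffOn_const
  have h2 : ContDiffOn ℝ (⊤ : ℕ∞) (fun z => fderiv ℝ f z (Pi.single a Complex.I)) s :=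
    hd.clm_apply contDiffOn_const
  exact (contDiffOn_const.mul (h1.sub (contDiffOn_const.mul h2)))

lemma pd_comm {n : ℕ} {a b : Fin n} {f : (Fin n → ℂ) → ℂ} {s : Set (Fin n → ℂ)}
    (hs : IsOpen s) (hf : ContDiffOn ℝ (⊤ : ℕ∞) f s) {z : Fin n → ℂ} (hz : z ∈ s) :
    pd a (pd b f) z = pd b (pd a f) z := by
  have hd : ContDiffOn ℝ (⊤ : ℕ∞) (fderiv ℝ f) s := hf.fderiv_of_isOpen hs (by simp)
  have hdz : DifferentiableAt ℝ (fderiv ℝ f) z :=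
    ((hd.differentiableOn (by simp)) z hz).differentiableAt (hs.mem_nhds hz)
  have hsymm : IsSymmSndFDerivAt ℝ f z :=
    (hf z hz).contDiffAt (hs.mem_nhds hz) |>.isSymmSndFDerivAt (by norm_num; exact WithTop.coe_le_coe.mpr (le_top : (2:ℕ∞) ≤ ⊤))
  have key : ∀ v : Fin n → ℂ, fderiv ℝ (fun w => fderiv ℝ f w v) z =
      (fderiv ℝ (fderiv ℝ f) z).flip v := by
    intro v
    have := fderiv_clm_apply (c := fderiv ℝ f) (u := fun _ => v) hdz (differentiableAt_const v)
    simpa using this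
  have hev : ∀ v : Fin n → ℂ, DifferentiableAt ℝ (fun w => fderiv ℝ f w v) z := by
    intro v
    exact hdz.clm_apply (differentiableAt_const v)
  have expand : ∀ v₁ v₂ w₁ w₂ : Fin n → ℂ,
      fderiv ℝ (fun w => (1/2 : ℂ) * (fderiv ℝ f w v₁ - Complex.I * fderiv ℝ f w v₂)) z w₁
      = (1/2 : ℂ) * (fderiv ℝ (fderiv ℝ f) z w₁ v₁ - Complex.I * fderiv ℝ (fderiv ℝ f) z w₁ v₂) := by
    intro v₁ v₂ w₁ w₂
    rw [fderiv_const_mul (a := fun w => fderiv ℝ f w v₁ - Complex.I * fderiv ℝ f w v₂) ((hev v₁).sub ((differentiableAt_const Complex.I).mul (hev v₂)))]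
    rw [fderiv_fun_sub (g := fun w => Complex.I * fderiv ℝ f w v₂) (hev v₁) ((differentiableAt_const Complex.I).mul (hev v₂)),
      fderiv_const_mul (hev v₂), key v₁, key v₂]
    simp
  unfold pd
  rw [expand _ _ _ 0, expand _ _ _ 0, expand _ _ _ 0, expand _ _ _ 0]
  have H := hsymm.eq
  rw [H (Pi.single a 1) (Pi.single b 1), H (Pi.single a 1) (Pi.single b Complex.I),
    H (Pi.single a Complex.I) (Pi.single b 1), H (Pi.single a Complex.I) (Pi.single b Complex.I)]
  ring

lemma pd_exp_ofReal {n : ℕ} {a : Fin n} {u : (Fin n → ℂ) → ℝ} {z : Fin n → ℂ}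
    (hu : DifferentiableAt ℝ u z) :
    pd a (fun w => (Real.exp (u w) : ℂ)) z
      = (Real.exp (u z) : ℂ) * pd a (fun w => (u w : ℂ)) z := by
  have hcu : DifferentiableAt ℝ (fun w => (u w : ℂ)) z := ofRealCLM.differentiableAt.comp z hu
  have hcomp : HasFDerivAt (fun w => Complex.exp ((u w : ℂ)))
      ((Complex.exp ((u z : ℂ))) • fderiv ℝ (fun w => (u w : ℂ)) z) z :=
    (Complex.hasDerivAt_exp ((u z : ℂ))).comp_hasFDerivAt z hcu.hasFDerivAt
  have heq : (fun w => (Real.exp (u w) : ℂ)) = fun w => Complex.exp ((u w : ℂ)) := by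
    funext w; exact Complex.ofReal_exp (u w)
  unfold pd
  rw [heq, hcomp.fderiv]
  simp [Complex.ofReal_exp, smul_eq_mul]
  ring

lemma contDiffOn_matrix_det {n : ℕ} {s : Set (Fin n → ℂ)}
    {M : (Fin n → ℂ) → Matrix (Fin n) (Fin n) ℂ}
    (h : ∀ i j, ContDiffOn ℝ (⊤ : ℕ∞) (fun w => M w i j) s) :
    ContDiffOn ℝ (⊤ : ℕ∞) (fun w => (M w).det) s := by
  simp only [Matrix.det_apply]
  apply ContDiffOn.sum
  intro σ _
  have : ContDiffOn ℝ (⊤ : ℕ∞) (fun w => ∏ i, M w (σ i) i) s := by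
    have := contDiffOn_prod' (t := Finset.univ) (f := fun i w => M w (σ i) i)
      (fun i _ => h (σ i) i)
    simpa [Finset.prod_fn] using this
  simpa [Units.smul_def, zsmul_eq_mul] using this.const_smul ((Equiv.Perm.sign σ : ℤ) : ℂ)

lemma contDiffOn_matrix_inv_entry {n : ℕ} {s : Set (Fin n → ℂ)}
    {M : (Fin n → ℂ) → Matrix (Fin n) (Fin n) ℂ}
    (h : ∀ i j, ContDiffOn ℝ (⊤ : ℕ∞) (fun w => M w i j) s)
    (hdet : ∀ w ∈ s, (M w).det ≠ 0) (i j : Fin n) :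
    ContDiffOn ℝ (⊤ : ℕ∞) (fun w => (M w)⁻¹ i j) s := by
  have hadj : ContDiffOn ℝ (⊤ : ℕ∞) (fun w => (M w).adjugate i j) s := by
    simp only [Matrix.adjugate_apply]
    apply contDiffOn_matrix_det
    intro k l
    rcases eq_or_ne k j with rfl | hkj
    · simpa using (contDiffOn_const :
        ContDiffOn ℝ (⊤ : ℕ∞) (fun _ : Fin n → ℂ => (Pi.single i 1 : Fin n → ℂ) l) s)
    · simpa [Matrix.updateRow_apply, hkj] using h k l
  have : (fun w => (M w)⁻¹ i j) = fun w => ((M w).det)⁻¹ * (M w).adjugate i j := by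
    funext w
    rw [Matrix.inv_def, Matrix.smul_apply, Ring.inverse_eq_inv, smul_eq_mul]
  rw [this]
  exact ((contDiffOn_matrix_det h).inv hdet).mul hadj

lemma pd_const {n : ℕ} (a : Fin n) (c : ℂ) (z : Fin n → ℂ) :
    pd a (fun _ => c) z = 0 := by
  unfold pd
  simp [fderiv_const]

lemma pd_neg {n : ℕ} (a : Fin n) (f : (Fin n → ℂ) → ℂ) (z : Fin n → ℂ) :
    pd a (fun w => -f w) z = -pd a f z := by
  unfold pd
  rw [fderiv_fun_neg]
  simp
  ring

lemma cdo_diffAt {n : ℕ} {G : Type*} [NormedAddCommGroup G] [NormedSpace ℝ G]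
    {F : (Fin n → ℂ) → G} {s : Set (Fin n → ℂ)} {w : Fin n → ℂ}
    (hs : IsOpen s) (h : ContDiffOn ℝ (⊤ : ℕ∞) F s) (hw : w ∈ s) : DifferentiableAt ℝ F w :=
  ((h.differentiableOn (by simp)) w hw).differentiableAt (hs.mem_nhds hw)

set_option maxHeartbeats 2000000 in
theorem locally_conformally_Kahler_torsion_bivector_vanishes
    {n : ℕ} (U : Set (Fin n → ℂ)) (hU : IsOpen U)
    (g Ginv : (Fin n → ℂ) → Fin n → Fin n → ℂ)
    (hg : ∀ j k, ContDiffOn ℝ (⊤ : ℕ∞) (fun z => g z j k) U)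
    (hherm : ∀ z ∈ U, ∀ j k, g z j k = (starRingEnd ℂ) (g z k j))
    (hGinv : ∀ z ∈ U, ∀ j l, (∑ k, Ginv z j k * g z l k) = if j = l then 1 else 0)
    (hGinv2 : ∀ z ∈ U, ∀ j l, (∑ k, Ginv z k j * g z k l) = if j = l then 1 else 0)
    -- locally conformally Kähler: around every point, ω = e^u ω₀ with ω₀ Kähler
    (hlcK : ∀ z ∈ U, ∃ W : Set (Fin n → ℂ), IsOpen W ∧ z ∈ W ∧ W ⊆ U ∧
      ∃ (u : (Fin n → ℂ) → ℝ) (g0 : (Fin n → ℂ) → Fin n → Fin n → ℂ),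
        ContDiffOn ℝ (⊤ : ℕ∞) u W ∧
        (∀ j k, ContDiffOn ℝ (⊤ : ℕ∞) (fun w => g0 w j k) W) ∧
        (∀ w ∈ W, ∀ j k, g0 w j k = (starRingEnd ℂ) (g0 w k j)) ∧
        -- ω₀ is Kähler: dω₀ = 0, i.e. ∂_m (g₀)_{l k̄} is symmetric in m, l
        (∀ w ∈ W, ∀ m l k,
          pd m (fun x => g0 x l k) w = pd l (fun x => g0 x m k) w) ∧
        (∀ w ∈ W, ∀ j k, g w j k = (Real.exp (u w) : ℂ) * g0 w j k)) :
    ∀ z ∈ U, ∀ p q, sigmaLoc g Ginv p q z = 0 := by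
  intro z hz p q
  obtain ⟨W, hWo, hzW, hWU, u, g0, hu, hg0, hg0herm, hKah, hconf⟩ := hlcK z hz
  set V := W ∩ U with hVdef
  have hVo : IsOpen V := hWo.inter hU
  have hzV : z ∈ V := ⟨hzW, hz⟩
  have hVW : V ⊆ W := Set.inter_subset_left
  have hVU : V ⊆ U := Set.inter_subset_right
  -- smooth inverse
  set M : (Fin n → ℂ) → Matrix (Fin n) (Fin n) ℂ := fun w => Matrix.of fun j k => g w k j
    with hMdef
  set GS : (Fin n → ℂ) → Fin n → Fin n → ℂ := fun w j k => (M w)⁻¹ j k with hGSdef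
  have hMB : ∀ w ∈ U, M w * Matrix.of (fun j k => Ginv w j k) = 1 := by
    intro w hw
    ext j l
    simp only [Matrix.mul_apply, Matrix.of_apply, Matrix.one_apply, hMdef]
    rw [Finset.sum_congr rfl (fun x _ => mul_comm (g w x j) (Ginv w x l))]
    rw [hGinv2 w hw l j]
    simp [eq_comm]
  have hBM : ∀ w ∈ U, Matrix.of (fun j k => Ginv w j k) * M w = 1 := by
    intro w hw
    ext j l
    simp only [Matrix.mul_apply, Matrix.of_apply, Matrix.one_apply, hMdef]
    exact hGinv w hw j l
  have hdet : ∀ w ∈ U, (M w).det ≠ 0 := by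
    intro w hw
    have h1 : IsUnit (M w) := ⟨⟨M w, Matrix.of (fun j k => Ginv w j k), hMB w hw, hBM w hw⟩, rfl⟩
    have := (Matrix.isUnit_iff_isUnit_det _).mp h1
    simpa [isUnit_iff_ne_zero] using this
  have hGeq : ∀ w ∈ U, ∀ j k, Ginv w j k = GS w j k := by
    intro w hw j k
    have h1 : (M w)⁻¹ = Matrix.of (fun j k => Ginv w j k) := Matrix.inv_eq_right_inv (hMB w hw)
    simp only [hGSdef, h1, Matrix.of_apply]
  have hGS : ∀ j k, ContDiffOn ℝ (⊤ : ℕ∞) (fun w => GS w j k) U := by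
    intro j k
    exact contDiffOn_matrix_inv_entry (fun i j => hg j i) hdet j k
  -- basics
  set cu : (Fin n → ℂ) → ℂ := fun w => ((u w : ℝ) : ℂ) with hcudef
  have hcu : ContDiffOn ℝ (⊤ : ℕ∞) cu W := ofRealCLM.contDiff.comp_contDiffOn hu
  set φ : Fin n → (Fin n → ℂ) → ℂ := fun a => pd a cu with hφdef
  have hφ : ∀ a, ContDiffOn ℝ (⊤ : ℕ∞) (φ a) W := fun a => pd_contDiffOn hWo hcu
  set E : (Fin n → ℂ) → ℂ := fun w => ((Real.exp (u w) : ℝ) : ℂ) with hEdef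
  have hE : ContDiffOn ℝ (⊤ : ℕ∞) E W := ofRealCLM.contDiff.comp_contDiffOn (Real.contDiff_exp.comp_contDiffOn hu)
  have hpdE : ∀ w ∈ W, ∀ a, pd a E w = E w * φ a w := by
    intro w hw a
    exact pd_exp_ofReal (cdo_diffAt hWo (hu.of_le (by simp)) hw)
  set f : Fin n → (Fin n → ℂ) → ℂ := fun r w => ∑ m, GS w m r * φ m w with hfdef
  have hf : ∀ r, ContDiffOn ℝ (⊤ : ℕ∞) (f r) V := by
    intro r
    apply ContDiffOn.sum
    intro m _
    exact ((hGS m r).mono hVU).mul ((hφ m).mono hVW)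
  -- K4: torsion formula
  have hT : ∀ w ∈ V, ∀ m l k, Tc g m l k w = φ m w * g w l k - φ l w * g w m k := by
    intro w hw m l k
    have hwW : w ∈ W := hVW hw
    have key : ∀ (a b c : Fin n), pd a (fun x => g x b c) w
        = E w * φ a w * g0 w b c + E w * pd a (fun x => g0 x b c) w := by
      intro a b c
      have he : (fun x => g x b c) =ᶠ[nhds w] (fun x => E x * g0 x b c) :=
        Filter.eventually_of_mem (hWo.mem_nhds hwW) (fun x hx => hconf x hx b c)
      rw [pd_congr he, pd_mul (cdo_diffAt hWo hE hwW) (cdo_diffAt hWo (hg0 b c) hwW),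
        hpdE w hwW a]
    show pd m (fun x => g x l k) w - pd l (fun x => g x m k) w = _
    rw [key m l k, key l m k, hKah w hwW m l k, hconf w hwW l k, hconf w hwW m k]
    ring
  have hdelta1 : ∀ w ∈ U, ∀ j l, (∑ k, GS w j k * g w l k) = if j = l then 1 else 0 := by
    intro w hw j l
    rw [Finset.sum_congr rfl (fun k _ => by rw [← hGeq w hw j k])]
    exact hGinv w hw j l
  have hdelta2 : ∀ w ∈ U, ∀ j l, (∑ k, GS w k j * g w k l) = if j = l then 1 else 0 := by
    intro w hw j l
    rw [Finset.sum_congr rfl (fun k _ => by rw [← hGeq w hw k j])]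
    exact hGinv2 w hw j l
  -- K5 pointwise identity for the inner function of sigmaLoc
  have key : ∀ k, ∀ w ∈ V, (∑ m, ∑ l, Ginv w m p * Ginv w l q * (-(Tc g m l k w)))
      = (if p = k then f q w else 0) - (if q = k then f p w else 0) := by
    intro k w hw
    have h1 : ∀ m l : Fin n, Ginv w m p * Ginv w l q * (-(Tc g m l k w))
        = (GS w m p * g w m k) * (GS w l q * φ l w)
          - (GS w m p * φ m w) * (GS w l q * g w l k) := by
      intro m l
      rw [hGeq w (hVU hw) m p, hGeq w (hVU hw) l q, hT w hw m l k]
      ring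
    calc (∑ m, ∑ l, Ginv w m p * Ginv w l q * (-(Tc g m l k w)))
        = ∑ m, ∑ l, ((GS w m p * g w m k) * (GS w l q * φ l w)
          - (GS w m p * φ m w) * (GS w l q * g w l k)) := by
          exact Finset.sum_congr rfl fun m _ => Finset.sum_congr rfl fun l _ => h1 m l
      _ = (∑ m, GS w m p * g w m k) * (∑ l, GS w l q * φ l w)
          - (∑ m, GS w m p * φ m w) * (∑ l, GS w l q * g w l k) := by
          simp only [Finset.sum_sub_distrib, Finset.sum_mul_sum]
      _ = (if p = k then 1 else 0) * f q w - f p w * (if q = k then 1 else 0) := by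
          rw [hdelta2 w (hVU hw) p k, hdelta2 w (hVU hw) q k]
      _ = (if p = k then f q w else 0) - (if q = k then f p w else 0) := by
          split_ifs <;> ring
  -- differentiability at z
  have hfd : ∀ r, DifferentiableAt ℝ (f r) z := fun r => cdo_diffAt hVo (hf r) hzV
  have hgd : ∀ j k0, DifferentiableAt ℝ (fun w => g w j k0) z :=
    fun j k0 => cdo_diffAt hU (hg j k0) hz
  -- reduction of sigmaLoc
  have hpdF : ∀ s k, pd s (fun w => ∑ m, ∑ l, Ginv w m p * Ginv w l q * (-(Tc g m l k w))) z
      = (if p = k then pd s (f q) z else 0) - (if q = k then pd s (f p) z else 0) := by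
    intro s k
    have he : (fun w => ∑ m, ∑ l, Ginv w m p * Ginv w l q * (-(Tc g m l k w)))
        =ᶠ[nhds z] (fun w => (if p = k then f q w else 0) - (if q = k then f p w else 0)) :=
      Filter.eventually_of_mem (hVo.mem_nhds hzV) (fun w hw => key k w hw)
    rw [pd_congr he]
    rcases eq_or_ne p k with hpk | hpk <;> rcases eq_or_ne q k with hqk | hqk
    · simp only [if_pos hpk, if_pos hqk]
      exact pd_sub (hfd q) (hfd p)
    · simp only [if_pos hpk, if_neg hqk, sub_zero]
    · simp only [if_neg hpk, if_pos hqk, zero_sub]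
      exact pd_neg s (f p) z
    · simp only [if_neg hpk, if_neg hqk, sub_zero]
      exact pd_const s 0 z
  have hsig : sigmaLoc g Ginv p q z
      = (∑ s, GS z s p * pd s (f q) z) - (∑ s, GS z s q * pd s (f p) z) := by
    show (∑ s, ∑ k, Ginv z s k * pd s (fun w => ∑ m, ∑ l,
        Ginv w m p * Ginv w l q * (-(Tc g m l k w))) z) = _
    rw [Finset.sum_congr rfl (fun s _ => Finset.sum_congr rfl (fun k _ => by
      rw [hpdF s k, hGeq z hz s k]))]
    simp only [mul_sub, Finset.sum_sub_distrib, mul_ite, mul_zero, Finset.sum_ite_eq,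
      Finset.mem_univ, if_true]
  set Sab : Fin n → Fin n → ℂ := fun a b => ∑ s, GS z s a * pd s (f b) z with hSdef
  -- potential identity: g_{l r} f_r = φ_l
  have hpot : ∀ l : Fin n, ∀ w ∈ V, (∑ r, g w l r * f r w) = φ l w := by
    intro l w hw
    calc (∑ r, g w l r * f r w)
        = ∑ r, ∑ m, (GS w m r * g w l r) * φ m w := by
          refine Finset.sum_congr rfl fun r _ => ?_
          simp only [hfdef, Finset.mul_sum]
          exact Finset.sum_congr rfl fun m _ => by ring
      _ = ∑ m, (∑ r, GS w m r * g w l r) * φ m w := by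
          rw [Finset.sum_comm]
          exact Finset.sum_congr rfl fun m _ => by rw [Finset.sum_mul]
      _ = φ l w := by
          rw [Finset.sum_congr rfl fun m _ => by rw [hdelta1 w (hVU hw) m l]]
          simp
  set D : Fin n → Fin n → ℂ := fun s l => pd s (fun w => ∑ r, g w l r * f r w) z with hDdef
  have hDpd : ∀ s l : Fin n, D s l = pd s (pd l cu) z := by
    intro s l
    exact pd_congr (Filter.eventually_of_mem (hVo.mem_nhds hzV) (fun w hw => hpot l w hw))
  have hDsym : ∀ s l, D s l = D l s := by
    intro s l
    rw [hDpd s l, hDpd l s, pd_comm hWo hcu hzW]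
  have hDexp : ∀ s l, D s l
      = ∑ r, (pd s (fun w => g w l r) z * f r z + g z l r * pd s (f r) z) := by
    intro s l
    rw [show D s l = pd s (fun w => ∑ r, g w l r * f r w) z from rfl]
    rw [pd_sum (F := fun r w => g w l r * f r w) (fun r _ => (hgd l r).mul (hfd r))]
    exact Finset.sum_congr rfl fun r _ => pd_mul (hgd l r) (hfd r)
  -- contraction helper
  have hcontr : ∀ (b : Fin n) (c : Fin n → ℂ),
      (∑ l, ∑ r, (GS z l b * g z l r) * c r) = c b := by
    intro b c
    rw [Finset.sum_comm]
    calc (∑ r, ∑ l, (GS z l b * g z l r) * c r)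
        = ∑ r, (∑ l, GS z l b * g z l r) * c r := by
          exact Finset.sum_congr rfl fun r _ => by rw [Finset.sum_mul]
      _ = ∑ r, (if b = r then 1 else 0) * c r := by
          exact Finset.sum_congr rfl fun r _ => by rw [hdelta2 z hz b r]
      _ = c b := by simp
  set Et : Fin n → Fin n → ℂ := fun a b =>
    ∑ s, ∑ l, ∑ r, GS z s a * GS z l b * (pd s (fun w => g w l r) z * f r z) with hEtdef
  set Φ : Fin n → Fin n → ℂ := fun a b => ∑ s, ∑ l, (GS z s a * GS z l b) * D s l with hPhidef
  have hΦ : ∀ a b, Φ a b = Et a b + Sab a b := by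
    intro a b
    have per : ∀ s l : Fin n, (GS z s a * GS z l b) * D s l
        = (∑ r, GS z s a * GS z l b * (pd s (fun w => g w l r) z * f r z))
          + (∑ r, (GS z l b * g z l r) * (GS z s a * pd s (f r) z)) := by
      intro s l
      rw [hDexp s l, Finset.mul_sum, ← Finset.sum_add_distrib]
      exact Finset.sum_congr rfl fun r _ => by ring
    calc Φ a b
        = ∑ s, ∑ l, ((∑ r, GS z s a * GS z l b * (pd s (fun w => g w l r) z * f r z))
          + (∑ r, (GS z l b * g z l r) * (GS z s a * pd s (f r) z))) :=
          Finset.sum_congr rfl fun s _ => Finset.sum_congr rfl fun l _ => per s l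
      _ = Et a b + ∑ s, ∑ l, ∑ r, (GS z l b * g z l r) * (GS z s a * pd s (f r) z) := by
          simp only [Finset.sum_add_distrib]
          rfl
      _ = Et a b + Sab a b := by
          congr 1
          exact Finset.sum_congr rfl fun s _ => hcontr b _
  have hΦsym : ∀ a b, Φ a b = Φ b a := by
    intro a b
    calc Φ a b
        = ∑ s, ∑ l, (GS z l a * GS z s b) * D l s := Finset.sum_comm
      _ = Φ b a := by
          refine Finset.sum_congr rfl fun s _ => Finset.sum_congr rfl fun l _ => ?_
          rw [hDsym l s]
          ring
  have hEtsym : ∀ a b, Et a b = Et b a := by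
    intro a b
    have swap : Et b a = ∑ s, ∑ l, ∑ r,
        GS z l b * GS z s a * (pd l (fun w => g w s r) z * f r z) := Finset.sum_comm
    have diff : Et a b - Et b a = ∑ s, ∑ l, ∑ r,
        (GS z s a * GS z l b) * (((φ s z * g z l r) - (φ l z * g z s r)) * f r z) := by
      rw [swap, ← Finset.sum_sub_distrib]
      refine Finset.sum_congr rfl fun s _ => ?_
      rw [← Finset.sum_sub_distrib]
      refine Finset.sum_congr rfl fun l _ => ?_
      rw [← Finset.sum_sub_distrib]
      refine Finset.sum_congr rfl fun r _ => ?_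
      have ht : pd s (fun w => g w l r) z - pd l (fun w => g w s r) z
          = φ s z * g z l r - φ l z * g z s r := hT z hzV s l r
      linear_combination (f r z * (GS z s a * GS z l b)) * ht
    have hzero : (∑ s, ∑ l, ∑ r,
        (GS z s a * GS z l b) * (((φ s z * g z l r) - (φ l z * g z s r)) * f r z)) = 0 := by
      calc (∑ s, ∑ l, ∑ r,
          (GS z s a * GS z l b) * (((φ s z * g z l r) - (φ l z * g z s r)) * f r z))
          = ∑ s, ∑ l, ∑ r, ((GS z s a * φ s z) * ((GS z l b * g z l r) * f r z)
            - (GS z l b * φ l z) * ((GS z s a * g z s r) * f r z)) := by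
            exact Finset.sum_congr rfl fun s _ => Finset.sum_congr rfl fun l _ =>
              Finset.sum_congr rfl fun r _ => by ring
        _ = (∑ s, ∑ l, ∑ r, (GS z s a * φ s z) * ((GS z l b * g z l r) * f r z))
            - ∑ s, ∑ l, ∑ r, (GS z l b * φ l z) * ((GS z s a * g z s r) * f r z) := by
            simp only [Finset.sum_sub_distrib]
        _ = (∑ s, (GS z s a * φ s z) * (∑ l, ∑ r, (GS z l b * g z l r) * f r z))
            - ∑ l, (GS z l b * φ l z) * (∑ s, ∑ r, (GS z s a * g z s r) * f r z) := by
            congr 1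
            · exact Finset.sum_congr rfl fun s _ => by simp only [Finset.mul_sum]
            · rw [Finset.sum_comm]
              exact Finset.sum_congr rfl fun l _ => by simp only [Finset.mul_sum]
        _ = (∑ s, (GS z s a * φ s z) * f b z) - ∑ l, (GS z l b * φ l z) * f a z := by
            rw [hcontr b (fun r => f r z), hcontr a (fun r => f r z)]
        _ = f a z * f b z - f b z * f a z := by
            rw [← Finset.sum_mul, ← Finset.sum_mul]
        _ = 0 := by ring
    have := diff.trans hzero
    exact sub_eq_zero.mp this
  have hSsym : Sab p q = Sab q p := by
    have h1 := hΦ p q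
    have h2 := hΦ q p
    have h3 := hΦsym p q
    have h4 := hEtsym p q
    have : Et p q + Sab p q = Et q p + Sab q p := by rw [← h1, ← h2, h3]
    rw [h4] at this
    exact add_left_cancel this
  rw [hsig]
  have e1 : (∑ s, GS z s p * pd s (f q) z) = Sab p q := rfl
  have e2 : (∑ s, GS z s q * pd s (f p) z) = Sab q p := rfl
  rw [e1, e2, hSsym, sub_self]
end

section
/- Let E be a Courant algebroid with decomposition E = ℓ ⊕ ℓ̄ ⊕ C₋ as above satisfying the F-term condition, and dual isotropic frames {e^j} ⊂ ℓ, {e_j} ⊂ ℓ̄. Then the function F^{ij} := tr(π_{ℓ̄} ∘ ad_{[e^i,e^j]}|_{ℓ̄}) + Σ_k (⟨D⟨e^i, [e_k,e^k]⟩, e^j⟩ − ⟨D⟨e^j, [e_k,e^k]⟩, e^i⟩) equals ⟨[[e_k,e^k], e^i], e^j⟩ + ⟨D⟨[e^i,e^j], e_k⟩, e^k⟩ (summation over k). -/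
/-!
STATEMENT 12: with `E = ℓ ⊕ ℓ̄ ⊕ C₋` satisfying the F-term condition and dual
isotropic frames `{e^j} ⊂ ℓ`, `{e_j} ⊂ ℓ̄`, the function
`F^{ij} = tr(π_{ℓ̄} ∘ ad_{[e^i,e^j]}|_{ℓ̄}) + Σ_k (⟨D⟨e^i,[e_k,e^k]⟩,e^j⟩ − ⟨D⟨e^j,[e_k,e^k]⟩,e^i⟩)`
equals `Σ_k (⟨[[e_k,e^k],e^i],e^j⟩ + ⟨D⟨[e^i,e^j],e_k⟩,e^k⟩)`.
Here `tr(π_{ℓ̄} ∘ ad_{[e^i,e^j]}|_{ℓ̄}) = Σ_k ⟨[[e^i,e^j],e_k],e^k⟩` in the frames.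
-/

/-!
STATEMENT 0: In a Courant algebroid `E` over `M` (sections form a module over the
smooth functions `C`), for all sections `a b` and functions `f`:
`[f•a, b] = f•[a,b] − f•D⟨a,b⟩ − ⟨Df,b⟩•a + D⟨b, f•a⟩`.
-/

/-- A Courant algebroid, presented algebraically: `C` plays the role of the ring of
smooth functions `C^∞(M)` and `E` the module of sections, with pairing, Dorfman
bracket, anchor (acting on functions as derivations) and the operator `D`
characterized by `⟨Df, a⟩ = π(a)(f)`. -/
structure CourantAlgebroid (C : Type*) [CommRing C] (E : Type*) [AddCommGroup E]
    [Module C E] where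
  /-- the non-degenerate symmetric bilinear form `⟨·,·⟩` -/
  pair : E →ₗ[C] E →ₗ[C] C
  /-- the Dorfman bracket `[·,·]` -/
  bracket : E → E → E
  /-- the anchor map `π`, acting on functions -/
  anchor : E → C → C
  /-- the operator `D : C^∞(M) → Γ(E)` -/
  Dop : C → E
  pair_symm : ∀ a b, pair a b = pair b a
  pair_nondeg : ∀ a, (∀ b, pair a b = 0) → a = 0
  anchor_add : ∀ a f g, anchor a (f + g) = anchor a f + anchor a g
  anchor_mul : ∀ a f g, anchor a (f * g) = f * anchor a g + g * anchor a f
  anchor_smul : ∀ (f : C) a g, anchor (f • a) g = f * anchor a g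
  /-- `⟨Df, a⟩ = π(a)(f)` -/
  pair_Dop : ∀ f a, pair (Dop f) a = anchor a f
  bracket_add_left : ∀ a b c, bracket (a + b) c = bracket a c + bracket b c
  bracket_add_right : ∀ a b c, bracket a (b + c) = bracket a b + bracket a c
  /-- axiom (1): Jacobi/Leibniz identity for the Dorfman bracket -/
  jacobi : ∀ a b c, bracket a (bracket b c) = bracket (bracket a b) c + bracket b (bracket a c)
  /-- axiom (2): `π[a,b] = [π a, π b]` -/
  anchor_bracket : ∀ a b f, anchor (bracket a b) f = anchor a (anchor b f) - anchor b (anchor a f)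
  /-- axiom (3): `[a, f b] = f [a,b] + (π a f) b` -/
  leibniz : ∀ a (f : C) b, bracket a (f • b) = f • bracket a b + anchor a f • b
  /-- axiom (4): `π(a)⟨b,c⟩ = ⟨[a,b],c⟩ + ⟨b,[a,c]⟩` -/
  anchor_pair : ∀ a b c, anchor a (pair b c) = pair (bracket a b) c + pair b (bracket a c)
  /-- axiom (5): `[a,b] + [b,a] = D⟨a,b⟩` -/
  bracket_symm : ∀ a b, bracket a b + bracket b a = Dop (pair a b)


theorem fterm_Fij_identity
    {C : Type*} [CommRing C] {E : Type*} [AddCommGroup E] [Module C E]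
    (CA : CourantAlgebroid C E)
    (L Lbar Cm : Submodule C E)
    (pL pLbar pm : E →ₗ[C] E)
    (hsum : ∀ a, pL a + pLbar a + pm a = a)
    (hpL_mem : ∀ a, pL a ∈ L) (hpLbar_mem : ∀ a, pLbar a ∈ Lbar) (hpm_mem : ∀ a, pm a ∈ Cm)
    (hpL_L : ∀ a ∈ L, pL a = a) (hpL_Lbar : ∀ a ∈ Lbar, pL a = 0) (hpL_Cm : ∀ a ∈ Cm, pL a = 0)
    (hpLbar_Lbar : ∀ a ∈ Lbar, pLbar a = a) (hpLbar_L : ∀ a ∈ L, pLbar a = 0)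
    (hpLbar_Cm : ∀ a ∈ Cm, pLbar a = 0)
    (hpm_Cm : ∀ a ∈ Cm, pm a = a) (hpm_L : ∀ a ∈ L, pm a = 0) (hpm_Lbar : ∀ a ∈ Lbar, pm a = 0)
    (hisoL : ∀ a ∈ L, ∀ b ∈ L, CA.pair a b = 0)
    (hisoLbar : ∀ a ∈ Lbar, ∀ b ∈ Lbar, CA.pair a b = 0)
    (horthL : ∀ a ∈ Cm, ∀ b ∈ L, CA.pair a b = 0)
    (horthLbar : ∀ a ∈ Cm, ∀ b ∈ Lbar, CA.pair a b = 0)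
    -- the F-term condition [ℓ,ℓ] ⊂ ℓ, [ℓ̄,ℓ̄] ⊂ ℓ̄
    (hFtermL : ∀ a ∈ L, ∀ b ∈ L, CA.bracket a b ∈ L)
    (hFtermLbar : ∀ a ∈ Lbar, ∀ b ∈ Lbar, CA.bracket a b ∈ Lbar)
    -- dual isotropic frames {e^j} of ℓ and {e_j} of ℓ̄
    {m : ℕ} (eSup eInf : Fin m → E)
    (heSup : ∀ j, eSup j ∈ L) (heInf : ∀ j, eInf j ∈ Lbar)
    (hdual : ∀ j k, CA.pair (eSup j) (eInf k) = if j = k then 1 else 0)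
    (hspanL : ∀ x ∈ L, x = ∑ j, CA.pair x (eInf j) • eSup j)
    (hspanLbar : ∀ x ∈ Lbar, x = ∑ j, CA.pair x (eSup j) • eInf j) :
    ∀ i j : Fin m,
      -- F^{ij}: the trace term (written in the frames) plus the D-terms …
      ((∑ k, CA.pair (CA.bracket (CA.bracket (eSup i) (eSup j)) (eInf k)) (eSup k))
        + ∑ k, (CA.pair (CA.Dop (CA.pair (eSup i) (CA.bracket (eInf k) (eSup k)))) (eSup j)
            - CA.pair (CA.Dop (CA.pair (eSup j) (CA.bracket (eInf k) (eSup k)))) (eSup i)))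
      -- … equals ⟨[[e_k,e^k],e^i],e^j⟩ + ⟨D⟨[e^i,e^j],e_k⟩,e^k⟩ (summed over k)
      = (∑ k, CA.pair (CA.bracket (CA.bracket (eInf k) (eSup k)) (eSup i)) (eSup j))
        + ∑ k, CA.pair (CA.Dop (CA.pair (CA.bracket (eSup i) (eSup j)) (eInf k))) (eSup k) := by
  intro i j
  rw [← Finset.sum_add_distrib, ← Finset.sum_add_distrib]
  apply Finset.sum_congr rfl
  intro k _
  set a := eSup i with ha
  set b := eSup j with hb
  set c := eInf k with hc
  set d := eSup k with hd
  set h := CA.bracket a b with hh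
  set g := CA.bracket c d with hg
  have anchor0 : ∀ x : E, CA.anchor x (0 : C) = 0 := by
    intro x
    have := CA.anchor_add x 0 0
    simp only [add_zero] at this
    linear_combination -this
  have h0 : CA.pair h d = 0 := hisoL _ (hFtermL _ (heSup i) _ (heSup j)) _ (heSup k)
  -- E1 : ⟨[c,h],d⟩ + ⟨h,g⟩ = 0
  have E1 : CA.pair (CA.bracket c h) d + CA.pair h g = 0 := by
    have := CA.anchor_pair c h d
    rw [h0, anchor0] at this
    linear_combination -this
  -- Esym1 : ⟨[h,c],d⟩ + ⟨[c,h],d⟩ = ⟨D⟨h,c⟩,d⟩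
  have Esym1 : CA.pair (CA.bracket h c) d + CA.pair (CA.bracket c h) d
      = CA.pair (CA.Dop (CA.pair h c)) d := by
    have := congrArg (fun x => CA.pair x d) (CA.bracket_symm h c)
    simpa using this
  -- E5 : ⟨[a,g],b⟩ + ⟨[g,a],b⟩ = ⟨D⟨a,g⟩,b⟩
  have E5 : CA.pair (CA.bracket a g) b + CA.pair (CA.bracket g a) b
      = CA.pair (CA.Dop (CA.pair a g)) b := by
    have := congrArg (fun x => CA.pair x b) (CA.bracket_symm a g)
    simpa using this
  -- Y : ⟨D⟨b,g⟩,a⟩ = ⟨h,g⟩ + ⟨[a,g],b⟩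
  have EY : CA.pair (CA.Dop (CA.pair b g)) a = CA.pair h g + CA.pair (CA.bracket a g) b := by
    rw [CA.pair_Dop, CA.anchor_pair a b g, CA.pair_symm b (CA.bracket a g)]
  linear_combination Esym1 - E1 - E5 - EY
end

section
/- Let E be a Courant algebroid with decomposition E = ℓ ⊕ ℓ̄ ⊕ C₋ satisfying ⟨ℓ,ℓ⟩ = ⟨ℓ̄,ℓ̄⟩ = 0, ⟨e^j, e_k⟩ = δ_{jk} for dual frames, the F-term condition, [e_j, e_k] = 0 for all j,k, the D-term equation (1/2)Σ_j [e^j, e_j] = u − u_ℓ for a section u with [u,·] = 0. Then the function R := Σ_{j,k} ( 3⟨[e^j,e_j]₋, [e^k,e_k]₋⟩ − ⟨[e^j,e_k]₋, [e^k,e_j]₋⟩ ) equals −4 Σ_j ⟨[e^j, u], e_j⟩ + 8⟨u₋, u₋⟩, where subscript − denotes the C₋-component. -/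
namespace CourantAlgebroid

variable {C : Type*} [CommRing C] {E : Type*} [AddCommGroup E] [Module C E]
  (CA : CourantAlgebroid C E)

def anchorHom (a : E) : C →+ C := AddMonoidHom.mk' (CA.anchor a) (CA.anchor_add a)

def bracketHom (a : E) : E →+ E := AddMonoidHom.mk' (CA.bracket a) (CA.bracket_add_right a)

lemma anchor_zero (a : E) : CA.anchor a 0 = 0 :=
  map_zero (CA.anchorHom a)

lemma anchor_neg (a : E) (f : C) : CA.anchor a (-f) = -CA.anchor a f :=
  map_neg (CA.anchorHom a) f

lemma anchor_sum {ι : Type*} (s : Finset ι) (a : E) (f : ι → C) :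
    CA.anchor a (∑ i ∈ s, f i) = ∑ i ∈ s, CA.anchor a (f i) :=
  map_sum (CA.anchorHom a) f s

lemma anchor_two_mul (a : E) (f : C) : CA.anchor a (2 * f) = 2 * CA.anchor a f := by
  rw [two_mul, two_mul, CA.anchor_add]

lemma bracket_sum_right {ι : Type*} (s : Finset ι) (a : E) (b : ι → E) :
    CA.bracket a (∑ i ∈ s, b i) = ∑ i ∈ s, CA.bracket a (b i) :=
  map_sum (CA.bracketHom a) b s

/-- In the smooth setting these include the locally constant functions, such as the Kronecker
deltas `⟨e^j, e_k⟩`. -/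
def IsConstant (f : C) : Prop := ∀ a, CA.anchor a f = 0

variable {CA}

lemma isConstant_zero : CA.IsConstant 0 := CA.anchor_zero

lemma isConstant_one : CA.IsConstant 1 := fun a => by
  simpa using CA.anchor_mul a 1 1

lemma isConstant_ite (p : Prop) [Decidable p] : CA.IsConstant (if p then 1 else 0) := by
  split_ifs
  exacts [isConstant_one, isConstant_zero]

lemma Dop_eq_zero_of_isConstant {f : C} (hf : CA.IsConstant f) : CA.Dop f = 0 :=
  CA.pair_nondeg _ fun b => (CA.pair_Dop f b).trans (hf b)

lemma bracket_swap_of_isConstant {a b : E} (h : CA.IsConstant (CA.pair a b)) :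
    CA.bracket b a = -CA.bracket a b :=
  eq_neg_of_add_eq_zero_right ((CA.bracket_symm a b).trans (Dop_eq_zero_of_isConstant h))

lemma bracket_eq_Dop_of_bracket_eq_zero {a b : E} (h : CA.bracket b a = 0) :
    CA.bracket a b = CA.Dop (CA.pair a b) := by
  rw [← CA.bracket_symm, h, add_zero]

lemma pair_bracket_rotate {x y z : E} (hxy : CA.IsConstant (CA.pair x y))
    (hxz : CA.IsConstant (CA.pair x z)) (hyz : CA.IsConstant (CA.pair y z)) :
    CA.pair (CA.bracket x y) z = CA.pair (CA.bracket y z) x := by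
  have h₁ := CA.anchor_pair x y z
  have h₂ := CA.anchor_pair z y x
  rw [hyz x] at h₁
  rw [CA.pair_symm y x, hxy z, bracket_swap_of_isConstant hxz,
    bracket_swap_of_isConstant hyz] at h₂
  simp only [map_neg, LinearMap.neg_apply] at h₂
  linear_combination -h₁ - h₂

lemma pair_bracket_bracket_of_pair_eq_zero {a a' b c : E}
    (h : CA.pair c (CA.bracket a b) = 0) :
    CA.pair c (CA.bracket a (CA.bracket a' b))
      = CA.pair c (CA.bracket (CA.bracket a a') b)
        - CA.pair (CA.bracket a' c) (CA.bracket a b) := by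
  have hleib := CA.anchor_pair a' c (CA.bracket a b)
  rw [h, CA.anchor_zero] at hleib
  rw [CA.jacobi, map_add]
  linear_combination -hleib

lemma pair_bracket_of_bracket_eq_zero {b c : E} (hbc : CA.bracket b c = 0) (x : E) :
    CA.pair c (CA.bracket x b) = CA.anchor c (CA.pair x b) - CA.anchor b (CA.pair x c) := by
  have hswap : CA.bracket x b = CA.Dop (CA.pair x b) - CA.bracket b x :=
    eq_sub_of_add_eq (CA.bracket_symm x b)
  have h := CA.anchor_pair b c x
  rw [hbc, map_zero, LinearMap.zero_apply, zero_add, CA.pair_symm c x] at h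
  rw [hswap, map_sub, CA.pair_symm c, CA.pair_Dop, ← h]

section Splitting

variable {L Lbar Cm : Submodule C E} {pL pLbar pm : E →ₗ[C] E}

lemma sub_pL_eq (hsum : ∀ a, pL a + pLbar a + pm a = a) (x : E) :
    x - pL x = pLbar x + pm x := by
  rw [sub_eq_iff_eq_add', ← add_assoc, hsum]

lemma pair_sub_pL_sub_pL (hsum : ∀ a, pL a + pLbar a + pm a = a)
    (hpLbar_mem : ∀ a, pLbar a ∈ Lbar) (hpm_mem : ∀ a, pm a ∈ Cm)
    (hisoLbar : ∀ a ∈ Lbar, ∀ b ∈ Lbar, CA.pair a b = 0)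
    (horthLbar : ∀ a ∈ Cm, ∀ b ∈ Lbar, CA.pair a b = 0) (x y : E) :
    CA.pair (x - pL x) (y - pL y) = CA.pair (pm x) (pm y) := by
  rw [sub_pL_eq hsum, sub_pL_eq hsum]
  simp only [map_add, LinearMap.add_apply, hisoLbar _ (hpLbar_mem x) _ (hpLbar_mem y),
    CA.pair_symm (pLbar x), horthLbar _ (hpm_mem _) _ (hpLbar_mem _)]
  ring

lemma pair_pm_pm_of_pL_eq_zero (hsum : ∀ a, pL a + pLbar a + pm a = a)
    (hpLbar_mem : ∀ a, pLbar a ∈ Lbar) (hpm_mem : ∀ a, pm a ∈ Cm)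
    (hisoLbar : ∀ a ∈ Lbar, ∀ b ∈ Lbar, CA.pair a b = 0)
    (horthLbar : ∀ a ∈ Cm, ∀ b ∈ Lbar, CA.pair a b = 0) {x y : E} (hx : pL x = 0)
    (hy : pL y = 0) : CA.pair (pm x) (pm y) = CA.pair x y := by
  simpa [hx, hy] using (pair_sub_pL_sub_pL hsum hpLbar_mem hpm_mem hisoLbar horthLbar x y).symm

lemma pair_pL_of_mem (hsum : ∀ a, pL a + pLbar a + pm a = a)
    (hpLbar_mem : ∀ a, pLbar a ∈ Lbar) (hpm_mem : ∀ a, pm a ∈ Cm)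
    (hisoLbar : ∀ a ∈ Lbar, ∀ b ∈ Lbar, CA.pair a b = 0)
    (horthLbar : ∀ a ∈ Cm, ∀ b ∈ Lbar, CA.pair a b = 0) (x : E) {y : E} (hy : y ∈ Lbar) :
    CA.pair (pL x) y = CA.pair x y := by
  rw [← sub_eq_zero, ← LinearMap.sub_apply, ← map_sub, ← neg_sub, sub_pL_eq hsum]
  simp [hisoLbar _ (hpLbar_mem x) _ hy, horthLbar _ (hpm_mem x) _ hy]

lemma pL_eq_zero_of_pair_eInf (hsum : ∀ a, pL a + pLbar a + pm a = a)
    (hpL_mem : ∀ a, pL a ∈ L) (hpLbar_mem : ∀ a, pLbar a ∈ Lbar) (hpm_mem : ∀ a, pm a ∈ Cm)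
    (hisoLbar : ∀ a ∈ Lbar, ∀ b ∈ Lbar, CA.pair a b = 0)
    (horthLbar : ∀ a ∈ Cm, ∀ b ∈ Lbar, CA.pair a b = 0)
    {m : ℕ} {eSup eInf : Fin m → E} (heInf : ∀ j, eInf j ∈ Lbar)
    (hspanL : ∀ x ∈ L, x = ∑ j, CA.pair x (eInf j) • eSup j)
    {x : E} (hx : ∀ s, CA.pair x (eInf s) = 0) : pL x = 0 := by
  rw [hspanL _ (hpL_mem x)]
  refine Finset.sum_eq_zero fun s _ => ?_
  rw [pair_pL_of_mem hsum hpLbar_mem hpm_mem hisoLbar horthLbar x (heInf s), hx, zero_smul]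

end Splitting

section DualFrames

variable {L Lbar : Submodule C E} {m : ℕ} {eSup eInf : Fin m → E}

lemma isConstant_pair_of_dual
    (hdual : ∀ j k, CA.pair (eSup j) (eInf k) = if j = k then 1 else 0) (j k : Fin m) :
    CA.IsConstant (CA.pair (eSup j) (eInf k)) := by
  rw [hdual]
  exact isConstant_ite _

lemma isConstant_pair_of_isotropic {N : Submodule C E}
    (hiso : ∀ a ∈ N, ∀ b ∈ N, CA.pair a b = 0) {a b : E} (ha : a ∈ N) (hb : b ∈ N) :
    CA.IsConstant (CA.pair a b) := by
  rw [hiso a ha b hb]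
  exact isConstant_zero

lemma pair_bracket_eSup_eInf_eInf (heInf : ∀ j, eInf j ∈ Lbar)
    (hisoLbar : ∀ a ∈ Lbar, ∀ b ∈ Lbar, CA.pair a b = 0)
    (hdual : ∀ j k, CA.pair (eSup j) (eInf k) = if j = k then 1 else 0)
    (hcomm : ∀ j k, CA.bracket (eInf j) (eInf k) = 0) (j k s : Fin m) :
    CA.pair (CA.bracket (eSup j) (eInf k)) (eInf s) = 0 := by
  rw [pair_bracket_rotate (isConstant_pair_of_dual hdual j k) (isConstant_pair_of_dual hdual j s)
    (isConstant_pair_of_isotropic hisoLbar (heInf k) (heInf s)), hcomm, map_zero,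
    LinearMap.zero_apply]

lemma sum_pair_eInf_bracket_bracket_eSup_eSup (heSup : ∀ j, eSup j ∈ L)
    (hisoL : ∀ a ∈ L, ∀ b ∈ L, CA.pair a b = 0)
    (hdual : ∀ j k, CA.pair (eSup j) (eInf k) = if j = k then 1 else 0)
    (hcomm : ∀ j k, CA.bracket (eInf j) (eInf k) = 0) :
    ∑ j, ∑ k, CA.pair (eInf k) (CA.bracket (CA.bracket (eSup k) (eSup j)) (eInf j))
      = 2 * ∑ k, CA.anchor (eInf k) (CA.pair (∑ j, CA.bracket (eSup j) (eInf j)) (eSup k)) := by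
  set f : Fin m → Fin m → C :=
    fun j k => CA.anchor (eInf k) (CA.pair (CA.bracket (eSup k) (eSup j)) (eInf j))
  have hterm : ∀ j k,
      CA.pair (eInf k) (CA.bracket (CA.bracket (eSup k) (eSup j)) (eInf j)) = f j k + f k j :=
    fun j k => by
      simp only [f]
      rw [pair_bracket_of_bracket_eq_zero (hcomm j k),
        bracket_swap_of_isConstant (isConstant_pair_of_isotropic hisoL (heSup k) (heSup j)),
        map_neg, LinearMap.neg_apply, anchor_neg, sub_eq_add_neg]
  have hrotate : ∀ k, ∑ j, CA.pair (CA.bracket (eSup k) (eSup j)) (eInf j)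
      = CA.pair (∑ j, CA.bracket (eSup j) (eInf j)) (eSup k) := fun k => by
    rw [map_sum, LinearMap.sum_apply]
    exact Finset.sum_congr rfl fun j _ => pair_bracket_rotate
      (isConstant_pair_of_isotropic hisoL (heSup k) (heSup j))
      (isConstant_pair_of_dual hdual k j) (isConstant_pair_of_dual hdual j j)
  calc _ = ∑ j, ∑ k, (f j k + f k j) := by simp only [hterm]
    _ = 2 * ∑ j, ∑ k, f j k := by
      rw [Finset.sum_congr rfl fun j _ => Finset.sum_add_distrib, Finset.sum_add_distrib,
        Finset.sum_comm (f := fun j k => f k j), two_mul]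
    _ = _ := by
      rw [Finset.sum_comm]
      simp only [f, ← anchor_sum, hrotate]

lemma sum_pair_eInf_bracket_eSup_bracket (heInf : ∀ j, eInf j ∈ Lbar)
    (hisoLbar : ∀ a ∈ Lbar, ∀ b ∈ Lbar, CA.pair a b = 0)
    (hdual : ∀ j k, CA.pair (eSup j) (eInf k) = if j = k then 1 else 0)
    (hcomm : ∀ j k, CA.bracket (eInf j) (eInf k) = 0) :
    ∑ j, ∑ k, CA.pair (eInf k) (CA.bracket (eSup k) (CA.bracket (eSup j) (eInf j)))
      = -CA.pair (∑ j, CA.bracket (eSup j) (eInf j)) (∑ j, CA.bracket (eSup j) (eInf j)) := by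
  set Δ := ∑ j, CA.bracket (eSup j) (eInf j)
  have hΔ : ∀ k, CA.pair (eInf k) Δ = 0 := fun k => by
    rw [map_sum]
    exact Finset.sum_eq_zero fun j _ => by
      rw [CA.pair_symm, pair_bracket_eSup_eInf_eInf heInf hisoLbar hdual hcomm]
  have hleibniz : ∀ k, CA.pair (eInf k) (CA.bracket (eSup k) Δ)
      = -CA.pair (CA.bracket (eSup k) (eInf k)) Δ := fun k => by
    have h := CA.anchor_pair (eSup k) (eInf k) Δ
    rw [hΔ, anchor_zero] at h
    linear_combination -h
  calc _ = ∑ k, CA.pair (eInf k) (CA.bracket (eSup k) Δ) := by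
        rw [Finset.sum_comm]
        exact Finset.sum_congr rfl fun k _ => by rw [bracket_sum_right, map_sum]
    _ = -CA.pair Δ Δ := by
        rw [Finset.sum_congr rfl fun k _ => hleibniz k, Finset.sum_neg_distrib,
          ← LinearMap.sum_apply, ← map_sum]

lemma sum_pair_bracket_eSup_eInf (heSup : ∀ j, eSup j ∈ L) (heInf : ∀ j, eInf j ∈ Lbar)
    (hisoL : ∀ a ∈ L, ∀ b ∈ L, CA.pair a b = 0)
    (hisoLbar : ∀ a ∈ Lbar, ∀ b ∈ Lbar, CA.pair a b = 0)
    (hdual : ∀ j k, CA.pair (eSup j) (eInf k) = if j = k then 1 else 0)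
    (hcomm : ∀ j k, CA.bracket (eInf j) (eInf k) = 0) :
    ∑ j, ∑ k, CA.pair (CA.bracket (eSup j) (eInf k)) (CA.bracket (eSup k) (eInf j))
      = 2 * ∑ k, CA.anchor (eInf k) (CA.pair (∑ j, CA.bracket (eSup j) (eInf j)) (eSup k))
        + CA.pair (∑ j, CA.bracket (eSup j) (eInf j)) (∑ j, CA.bracket (eSup j) (eInf j)) := by
  have hjacobi : ∀ j k, CA.pair (CA.bracket (eSup j) (eInf k)) (CA.bracket (eSup k) (eInf j))
      = CA.pair (eInf k) (CA.bracket (CA.bracket (eSup k) (eSup j)) (eInf j))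
        - CA.pair (eInf k) (CA.bracket (eSup k) (CA.bracket (eSup j) (eInf j))) := fun j k => by
    rw [pair_bracket_bracket_of_pair_eq_zero
      (by rw [CA.pair_symm, pair_bracket_eSup_eInf_eInf heInf hisoLbar hdual hcomm])]
    ring
  simp only [hjacobi, Finset.sum_sub_distrib,
    sum_pair_eInf_bracket_bracket_eSup_eSup heSup hisoL hdual hcomm,
    sum_pair_eInf_bracket_eSup_bracket heInf hisoLbar hdual hcomm]
  ring

end DualFrames

end CourantAlgebroid

open CourantAlgebroid

theorem dterm_R_identity_general
    {C : Type*} [CommRing C] {E : Type*} [AddCommGroup E] [Module C E]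
    (CA : CourantAlgebroid C E)
    (L Lbar Cm : Submodule C E)
    (pL pLbar pm : E →ₗ[C] E)
    (hsum : ∀ a, pL a + pLbar a + pm a = a)
    (hpL_mem : ∀ a, pL a ∈ L) (hpLbar_mem : ∀ a, pLbar a ∈ Lbar) (hpm_mem : ∀ a, pm a ∈ Cm)
    (hisoL : ∀ a ∈ L, ∀ b ∈ L, CA.pair a b = 0)
    (hisoLbar : ∀ a ∈ Lbar, ∀ b ∈ Lbar, CA.pair a b = 0)
    (horthLbar : ∀ a ∈ Cm, ∀ b ∈ Lbar, CA.pair a b = 0)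
    -- dual isotropic frames {e^j} ⊂ ℓ, {e_j} ⊂ ℓ̄ with ⟨e^j,e_k⟩ = δ_{jk}
    {m : ℕ} (eSup eInf : Fin m → E)
    (heSup : ∀ j, eSup j ∈ L) (heInf : ∀ j, eInf j ∈ Lbar)
    (hdual : ∀ j k, CA.pair (eSup j) (eInf k) = if j = k then 1 else 0)
    (hspanL : ∀ x ∈ L, x = ∑ j, CA.pair x (eInf j) • eSup j)
    -- the frames satisfy [e_j, e_k] = 0
    (hcomm : ∀ j k, CA.bracket (eInf j) (eInf k) = 0)
    -- a section u with [u, ·] = 0 …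
    (u : E) (hu : ∀ a : E, CA.bracket u a = 0)
    -- … solving the D-term equation (1/2) Σ_j [e^j, e_j] = u − u_ℓ
    (hDterm : ∑ j, CA.bracket (eSup j) (eInf j) = 2 • (u - pL u)) :
    -- R = Σ_{j,k} (3⟨[e^j,e_j]₋,[e^k,e_k]₋⟩ − ⟨[e^j,e_k]₋,[e^k,e_j]₋⟩)
    --   = −4 Σ_j ⟨[e^j,u],e_j⟩ + 8 ⟨u₋,u₋⟩
    (∑ j, ∑ k,
        ((3 : C) * CA.pair (pm (CA.bracket (eSup j) (eInf j))) (pm (CA.bracket (eSup k) (eInf k)))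
          - CA.pair (pm (CA.bracket (eSup j) (eInf k))) (pm (CA.bracket (eSup k) (eInf j)))))
      = -(4 : C) * (∑ j, CA.pair (CA.bracket (eSup j) u) (eInf j))
          + (8 : C) * CA.pair (pm u) (pm u) := by
  set Δ := ∑ j, CA.bracket (eSup j) (eInf j) with hΔ
  have hpm_pair : ∀ j k j' k', CA.pair (pm (CA.bracket (eSup j) (eInf k)))
      (pm (CA.bracket (eSup j') (eInf k')))
        = CA.pair (CA.bracket (eSup j) (eInf k)) (CA.bracket (eSup j') (eInf k')) := by
    have hpL : ∀ j k, pL (CA.bracket (eSup j) (eInf k)) = 0 := fun j k =>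
      pL_eq_zero_of_pair_eInf hsum hpL_mem hpLbar_mem hpm_mem hisoLbar horthLbar heInf hspanL
        (pair_bracket_eSup_eInf_eInf heInf hisoLbar hdual hcomm j k)
    exact fun j k j' k' =>
      pair_pm_pm_of_pL_eq_zero hsum hpLbar_mem hpm_mem hisoLbar horthLbar (hpL j k) (hpL j' k')
  have hΔΔ : CA.pair Δ Δ = 4 * CA.pair (pm u) (pm u) := by
    rw [hDterm, two_nsmul]
    simp only [map_add, LinearMap.add_apply,
      pair_sub_pL_sub_pL hsum hpLbar_mem hpm_mem hisoLbar horthLbar]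
    ring
  have hΔeSup : ∀ k, CA.anchor (eInf k) (CA.pair Δ (eSup k))
      = 2 * CA.pair (CA.bracket (eSup k) u) (eInf k) := fun k => by
    rw [hDterm, two_nsmul, map_add, LinearMap.add_apply, map_sub, LinearMap.sub_apply,
      hisoL _ (hpL_mem u) _ (heSup k), sub_zero, ← two_mul, anchor_two_mul,
      bracket_eq_Dop_of_bracket_eq_zero (hu _), CA.pair_Dop, CA.pair_symm]
  have hdiagonal : ∑ j, ∑ k, (3 : C) * CA.pair (CA.bracket (eSup j) (eInf j))
      (CA.bracket (eSup k) (eInf k)) = 3 * CA.pair Δ Δ := by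
    simp only [Δ, map_sum, LinearMap.sum_apply, Finset.mul_sum]
    exact Finset.sum_comm
  simp only [hpm_pair, Finset.sum_sub_distrib]
  rw [hdiagonal, sum_pair_bracket_eSup_eInf heSup heInf hisoL hisoLbar hdual hcomm, ← hΔ, hΔΔ,
    Finset.sum_congr rfl fun k _ => hΔeSup k, ← Finset.mul_sum]
  ring

theorem dterm_R_identity
    {C : Type*} [CommRing C] {E : Type*} [AddCommGroup E] [Module C E]
    (CA : CourantAlgebroid C E)
    (L Lbar Cm : Submodule C E)
    (pL pLbar pm : E →ₗ[C] E)
    (hsum : ∀ a, pL a + pLbar a + pm a = a)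
    (hpL_mem : ∀ a, pL a ∈ L) (hpLbar_mem : ∀ a, pLbar a ∈ Lbar) (hpm_mem : ∀ a, pm a ∈ Cm)
    (hpL_L : ∀ a ∈ L, pL a = a) (hpL_Lbar : ∀ a ∈ Lbar, pL a = 0) (hpL_Cm : ∀ a ∈ Cm, pL a = 0)
    (hpLbar_Lbar : ∀ a ∈ Lbar, pLbar a = a) (hpLbar_L : ∀ a ∈ L, pLbar a = 0)
    (hpLbar_Cm : ∀ a ∈ Cm, pLbar a = 0)
    (hpm_Cm : ∀ a ∈ Cm, pm a = a) (hpm_L : ∀ a ∈ L, pm a = 0) (hpm_Lbar : ∀ a ∈ Lbar, pm a = 0)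
    (hisoL : ∀ a ∈ L, ∀ b ∈ L, CA.pair a b = 0)
    (hisoLbar : ∀ a ∈ Lbar, ∀ b ∈ Lbar, CA.pair a b = 0)
    (horthL : ∀ a ∈ Cm, ∀ b ∈ L, CA.pair a b = 0)
    (horthLbar : ∀ a ∈ Cm, ∀ b ∈ Lbar, CA.pair a b = 0)
    -- the F-term condition
    (hFtermL : ∀ a ∈ L, ∀ b ∈ L, CA.bracket a b ∈ L)
    (hFtermLbar : ∀ a ∈ Lbar, ∀ b ∈ Lbar, CA.bracket a b ∈ Lbar)
    -- dual isotropic frames {e^j} ⊂ ℓ, {e_j} ⊂ ℓ̄ with ⟨e^j,e_k⟩ = δ_{jk}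
    {m : ℕ} (eSup eInf : Fin m → E)
    (heSup : ∀ j, eSup j ∈ L) (heInf : ∀ j, eInf j ∈ Lbar)
    (hdual : ∀ j k, CA.pair (eSup j) (eInf k) = if j = k then 1 else 0)
    (hspanL : ∀ x ∈ L, x = ∑ j, CA.pair x (eInf j) • eSup j)
    (hspanLbar : ∀ x ∈ Lbar, x = ∑ j, CA.pair x (eSup j) • eInf j)
    -- the frames satisfy [e_j, e_k] = 0
    (hcomm : ∀ j k, CA.bracket (eInf j) (eInf k) = 0)
    -- a section u with [u, ·] = 0 …
    (u : E) (hu : ∀ a : E, CA.bracket u a = 0)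
    -- … solving the D-term equation (1/2) Σ_j [e^j, e_j] = u − u_ℓ
    (hDterm : ∑ j, CA.bracket (eSup j) (eInf j) = 2 • (u - pL u)) :
    -- R = Σ_{j,k} (3⟨[e^j,e_j]₋,[e^k,e_k]₋⟩ − ⟨[e^j,e_k]₋,[e^k,e_j]₋⟩)
    --   = −4 Σ_j ⟨[e^j,u],e_j⟩ + 8 ⟨u₋,u₋⟩
    (∑ j, ∑ k,
        ((3 : C) * CA.pair (pm (CA.bracket (eSup j) (eInf j))) (pm (CA.bracket (eSup k) (eInf k)))
          - CA.pair (pm (CA.bracket (eSup j) (eInf k))) (pm (CA.bracket (eSup k) (eInf j)))))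
      = -(4 : C) * (∑ j, CA.pair (CA.bracket (eSup j) u) (eInf j))
          + (8 : C) * CA.pair (pm u) (pm u) :=
  dterm_R_identity_general CA L Lbar Cm pL pLbar pm hsum hpL_mem hpLbar_mem hpm_mem hisoL hisoLbar
    horthLbar eSup eInf heSup heInf hdual hspanL hcomm u hu hDterm
end
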